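/- Let Γ be a finitely generated group and Z a uniformly recurrent subgroup of Γ. If there exists H ∈ Z such that H is coamenable, then every K ∈ Z is coamenable; that is, Z is coamenable. -/

import Mathlib

open scoped Classical

/-- Conjugation action of a group on its subgroups: `g • H = gHg⁻¹`. -/
def conjSub {Γ : Type*} [Group Γ] (g : Γ) (H : Subgroup Γ) : Subgroup Γ :=
  Subgroup.map (MulAut.conj g).toMonoidHom H

/-- The Chabauty-type topology on `Sub(Γ)`: the topology induced from the product
topology on `{0,1}^Γ` via `H ↦ (γ ↦ decide (γ ∈ H))`. -/
noncomputable instance chabauty {Γ : Type*} [Group Γ] : TopologicalSpace (Subgroup Γ) :=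
  TopologicalSpace.induced
    (fun H (g : Γ) => @decide (g ∈ H) (Classical.dec _)) inferInstance

/-- A uniformly recurrent subgroup: a nonempty, closed, conjugation-invariant subset of
`Sub(Γ)` on which every conjugation orbit is dense. -/
structure IsURS {Γ : Type*} [Group Γ] (Z : Set (Subgroup Γ)) : Prop where
  nonempty : Z.Nonempty
  closed : IsClosed Z
  invariant : ∀ g : Γ, ∀ H ∈ Z, conjSub g H ∈ Z
  minimal : ∀ H ∈ Z, ∀ K ∈ Z, K ∈ closure {L : Subgroup Γ | ∃ g : Γ, conjSub g H = L}

/-- A subgroup `H ≤ Γ` is coamenable if the action of `Γ` on `Γ/H` is amenable: there is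
a sequence of nonempty finite subsets `Fₖ ⊆ Γ/H` with `|g•Fₖ ∪ Fₖ|/|Fₖ| → 1` for all `g`. -/
noncomputable def Coamenable {Γ : Type*} [Group Γ] (H : Subgroup Γ) : Prop :=
  ∃ F : ℕ → Finset (Γ ⧸ H), (∀ k, (F k).Nonempty) ∧
    ∀ g : Γ, Filter.Tendsto
      (fun k => ((((F k).image (fun x => g • x)) ∪ F k).card : ℝ) / ((F k).card : ℝ))
      Filter.atTop (nhds 1)

/-!
If `S` generates `Γ`, coamenability of `H` amounts to the existence, for every `ε > 0`, of a
finite nonempty `F ⊆ Γ ⧸ H` moved by each `s ∈ S` by at most `ε |F|` points (a word of length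
`n` in `S` then moves at most `n ε |F|` points). Writing `F` as the image of a finite `T ⊆ Γ`,
the cardinalities involved only depend on which `x⁻¹ y` with `x, y ∈ T ∪ S T` lie in `H`. By
minimality `H` lies in the closure of the conjugates of `K`, so some `g K g⁻¹` agrees with `H`
on these finitely many elements, and `x ↦ x g K` carries `T` to an equally good Følner set in
`Γ ⧸ K`.
-/

open scoped Pointwise
open Finset

lemma card_image_eq_card_image_of_eq_iff {α β γ : Type*} [DecidableEq β] [DecidableEq γ]
    {s : Finset α} {f : α → β} {g : α → γ} (h : ∀ x ∈ s, ∀ y ∈ s, f x = f y ↔ g x = g y) :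
    #(s.image f) = #(s.image g) := by
  set p : α → β × γ := fun x => (f x, g x)
  have hfst : #((s.image p).image Prod.fst) = #(s.image p) := by
    refine card_image_of_injOn ?_
    rintro _ hx' _ hy' hxy
    obtain ⟨x, hx, rfl⟩ := mem_image.1 hx'
    obtain ⟨y, hy, rfl⟩ := mem_image.1 hy'
    exact Prod.ext hxy ((h x hx y hy).1 hxy)
  have hsnd : #((s.image p).image Prod.snd) = #(s.image p) := by
    refine card_image_of_injOn ?_
    rintro _ hx' _ hy' hxy
    obtain ⟨x, hx, rfl⟩ := mem_image.1 hx'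
    obtain ⟨y, hy, rfl⟩ := mem_image.1 hy'
    exact Prod.ext ((h x hx y hy).2 hxy) hxy
  rw [image_image] at hfst hsnd
  exact hfst.trans hsnd.symm

section FoelnerSet

variable {Γ X Y : Type*} [Group Γ] [MulAction Γ X] [DecidableEq X]
  [MulAction Γ Y] [DecidableEq Y]

def IsFoelnerSet (S : Finset Γ) (ε : ℝ) (F : Finset X) : Prop :=
  F.Nonempty ∧ ∀ s ∈ S, (#(s • F \ F) : ℝ) ≤ ε * #F

lemma card_mul_smul_sdiff_le (a b : Γ) (F : Finset X) :
    #((a * b) • F \ F) ≤ #(a • F \ F) + #(b • F \ F) := by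
  calc #((a * b) • F \ F) ≤ #((a * b) • F \ a • F ∪ a • F \ F) :=
        card_le_card (sdiff_triangle _ _ _)
    _ ≤ #((a * b) • F \ a • F) + #(a • F \ F) := card_union_le _ _
    _ = #(a • F \ F) + #(b • F \ F) := by
        rw [mul_smul, ← smul_finset_sdiff, card_smul_finset, add_comm]

lemma card_inv_smul_sdiff (a : Γ) (F : Finset X) : #(a⁻¹ • F \ F) = #(a • F \ F) := by
  calc #(a⁻¹ • F \ F) = #(F \ a • F) := by
        rw [← card_smul_finset a, smul_finset_sdiff, smul_inv_smul]
    _ = #(a • F \ F) := card_sdiff_comm (card_smul_finset a F).symm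

lemma exists_card_smul_sdiff_le_of_mem_closure {S : Finset Γ} {g : Γ}
    (hg : g ∈ Subgroup.closure (S : Set Γ)) :
    ∃ n : ℕ, ∀ (F : Finset X) (m : ℝ), (∀ s ∈ S, (#(s • F \ F) : ℝ) ≤ m) →
      (#(g • F \ F) : ℝ) ≤ n * m := by
  induction hg using Subgroup.closure_induction with
  | mem s hs => exact ⟨1, fun F m hm => by simpa using hm s hs⟩
  | one => exact ⟨0, fun F m _ => by simp⟩
  | mul a b _ _ iha ihb =>
    obtain ⟨na, hna⟩ := iha
    obtain ⟨nb, hnb⟩ := ihb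
    refine ⟨na + nb, fun F m hm => ?_⟩
    calc (#((a * b) • F \ F) : ℝ) ≤ #(a • F \ F) + #(b • F \ F) := by
          exact_mod_cast card_mul_smul_sdiff_le a b F
      _ ≤ na * m + nb * m := add_le_add (hna F m hm) (hnb F m hm)
      _ = ↑(na + nb) * m := by push_cast; ring
  | inv a _ iha =>
    obtain ⟨n, hn⟩ := iha
    exact ⟨n, fun F m hm => by rw [card_inv_smul_sdiff]; exact hn F m hm⟩

lemma IsFoelnerSet.image_of_eq_iff {S T : Finset Γ} {ε : ℝ} {f : Γ → X} {f' : Γ → Y}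
    (hf : ∀ s x, f (s * x) = s • f x) (hf' : ∀ s x, f' (s * x) = s • f' x)
    (h : ∀ x ∈ T ∪ S * T, ∀ y ∈ T ∪ S * T, f x = f y ↔ f' x = f' y)
    (hF : IsFoelnerSet S ε (T.image f)) : IsFoelnerSet S ε (T.image f') := by
  have hcard : ∀ U ⊆ T ∪ S * T, #(U.image f) = #(U.image f') := fun U hU =>
    card_image_eq_card_image_of_eq_iff fun x hx y hy => h x (hU hx) y (hU hy)
  refine ⟨image_nonempty.2 (image_nonempty.1 hF.1), fun s hs => ?_⟩
  have hsub : s • T ∪ T ⊆ T ∪ S * T :=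
    union_subset (subset_union_right.trans' (smul_finset_subset_mul hs)) subset_union_left
  have hunion : #(s • T.image f' ∪ T.image f') = #(s • T.image f ∪ T.image f) := by
    rw [← image_smul_comm f' s T (hf' s), ← image_smul_comm f s T (hf s), ← image_union,
      ← image_union, hcard _ hsub]
  have hT : #(T.image f') = #(T.image f) := (hcard T subset_union_left).symm
  have e₁ := card_sdiff_add_card (s • T.image f') (T.image f')
  have e₂ := card_sdiff_add_card (s • T.image f) (T.image f)
  have hsdiff : #(s • T.image f' \ T.image f') = #(s • T.image f \ T.image f) := by omega
  rw [hsdiff, hT]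
  exact hF.2 s hs

end FoelnerSet

section Coamenable

variable {Γ : Type*} [Group Γ]

lemma Coamenable.exists_isFoelnerSet {H : Subgroup Γ} (hH : Coamenable H) (S : Finset Γ)
    {ε : ℝ} (hε : 0 < ε) : ∃ F : Finset (Γ ⧸ H), IsFoelnerSet S ε F := by
  obtain ⟨F, hne, hF⟩ := hH
  have : ∀ᶠ k in Filter.atTop, ∀ s ∈ S, (#(s • F k ∪ F k) : ℝ) / #(F k) < 1 + ε :=
    (Filter.eventually_all_finset S).2 fun s _ =>
      (hF s).eventually_lt_const (lt_add_of_pos_right 1 hε)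
  obtain ⟨k, hk⟩ := this.exists
  have hpos : (0 : ℝ) < #(F k) := by exact_mod_cast (hne k).card_pos
  refine ⟨F k, hne k, fun s hs => ?_⟩
  have := hk s hs
  rw [div_lt_iff₀ hpos, ← card_sdiff_add_card, Nat.cast_add] at this
  linarith

lemma coamenable_of_forall_exists_isFoelnerSet {K : Subgroup Γ} {S : Finset Γ}
    (hS : Subgroup.closure (S : Set Γ) = ⊤)
    (h : ∀ ε : ℝ, 0 < ε → ∃ F : Finset (Γ ⧸ K), IsFoelnerSet S ε F) : Coamenable K := by
  choose F hF using fun k : ℕ => h (1 / (k + 1)) (by positivity)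
  refine ⟨F, fun k => (hF k).1, fun g => ?_⟩
  obtain ⟨n, hn⟩ := exists_card_smul_sdiff_le_of_mem_closure (X := Γ ⧸ K) (hS ▸ Subgroup.mem_top g)
  have hpos : ∀ k, (0 : ℝ) < #(F k) := fun k => by exact_mod_cast (hF k).1.card_pos
  have hle : ∀ k, (#(g • F k ∪ F k) : ℝ) / #(F k) ≤ 1 + n * (1 / (k + 1)) := fun k => by
    have := hn (F k) _ (hF k).2
    rw [div_le_iff₀ (hpos k), ← card_sdiff_add_card, Nat.cast_add]
    linarith
  have hge : ∀ k, 1 ≤ (#(g • F k ∪ F k) : ℝ) / #(F k) := fun k => by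
    rw [le_div_iff₀ (hpos k), one_mul]
    exact_mod_cast card_le_card subset_union_right
  have hlim : Filter.Tendsto (fun k : ℕ => 1 + (n : ℝ) * (1 / (k + 1))) Filter.atTop (nhds 1) := by
    simpa using (tendsto_one_div_add_atTop_nhds_zero_nat.const_mul (n : ℝ)).const_add 1
  exact tendsto_of_tendsto_of_tendsto_of_le_of_le tendsto_const_nhds hlim hge hle

end Coamenable

section Conjugation

variable {Γ : Type*} [Group Γ]

lemma mem_conjSub {g x : Γ} {K : Subgroup Γ} : x ∈ conjSub g K ↔ g⁻¹ * x * g ∈ K := by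
  rw [conjSub, Subgroup.mem_map_equiv, MulAut.conj_symm_apply]

lemma QuotientGroup.mk_mul_eq_mk_mul_iff {K : Subgroup Γ} {x y g : Γ} :
    ((x * g : Γ) : Γ ⧸ K) = (y * g : Γ) ↔ x⁻¹ * y ∈ conjSub g K := by
  rw [QuotientGroup.eq, mem_conjSub]
  group

lemma exists_mem_forall_mem_iff_of_mem_closure {A : Set (Subgroup Γ)} {L : Subgroup Γ}
    (hL : L ∈ closure A) (Q : Finset Γ) : ∃ M ∈ A, ∀ x ∈ Q, x ∈ M ↔ x ∈ L := by
  let χ : Subgroup Γ → Γ → Bool := fun H g => @decide (g ∈ H) (Classical.dec _)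
  have hU : IsOpen (χ ⁻¹' (Q : Set Γ).pi fun x => {χ L x}) :=
    continuous_induced_dom.isOpen_preimage _
      (isOpen_set_pi Q.finite_toSet fun _ _ => isOpen_discrete _)
  obtain ⟨M, hMU, hMA⟩ := mem_closure_iff.1 hL _ hU fun _ _ => rfl
  exact ⟨M, hMA, fun x hx => decide_eq_decide.1 (hMU x hx)⟩

end Conjugation

/-- if one member of a URS of a finitely generated group is coamenable,
then every member is, i.e. the URS is coamenable. -/
theorem coamenable_of_mem_coamenable
    {Γ : Type*} [Group Γ] [Group.FG Γ]
    (Z : Set (Subgroup Γ)) (hZ : IsURS Z)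
    (H : Subgroup Γ) (hH : H ∈ Z) (hcoam : Coamenable H) :
    ∀ K ∈ Z, Coamenable K := by
  intro K hK
  obtain ⟨S, hS⟩ := Group.fg_def.1 ‹Group.FG Γ›
  refine coamenable_of_forall_exists_isFoelnerSet hS fun ε hε => ?_
  obtain ⟨F, hF⟩ := hcoam.exists_isFoelnerSet S hε
  obtain ⟨T, rfl⟩ : ∃ T : Finset Γ, T.image QuotientGroup.mk = F :=
    ⟨F.image Quotient.out, by simp [image_image, Function.comp_def]⟩
  obtain ⟨_, ⟨g, rfl⟩, hg⟩ := exists_mem_forall_mem_iff_of_mem_closure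
    (hZ.minimal K hK H hH) ((T ∪ S * T)⁻¹ * (T ∪ S * T))
  refine ⟨T.image fun x => ((x * g : Γ) : Γ ⧸ K),
    hF.image_of_eq_iff (fun _ _ => rfl) (fun s x => by simp [mul_assoc]) fun x hx y hy => ?_⟩
  rw [QuotientGroup.eq, QuotientGroup.mk_mul_eq_mk_mul_iff]
  exact (hg _ (mul_mem_mul (inv_mem_inv hx) hy)).symm
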